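/- liminf_{n→∞} p_{n+1}^{1/(n+1)} / p_n^{1/n} ≤ 1, where p_n is the n-th prime. -/
import Mathlib

/-- `p n` is the `n`-th prime number (1-indexed), as a real number. -/
noncomputable def p (n : ℕ) : ℝ := Nat.nth Nat.Prime (n - 1)

lemma nth_prime_le_pow (k : ℕ) : Nat.nth Nat.Prime k ≤ 2 ^ (k + 1) := by
  induction k with
  | zero => simp
  | succ k ih =>
    have hinf := Nat.infinite_setOf_prime
    have hp : Nat.Prime (Nat.nth Nat.Prime k) := Nat.nth_mem_of_infinite hinf k
    obtain ⟨q, hq, h1, h2⟩ :=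
      Nat.exists_prime_lt_and_le_two_mul (Nat.nth Nat.Prime k) hp.pos.ne'
    have hcount : k + 1 ≤ Nat.count Nat.Prime q := by
      have := Nat.count_nth_succ_of_infinite hinf k
      calc k + 1 = Nat.count Nat.Prime (Nat.nth Nat.Prime k + 1) := this.symm
        _ ≤ Nat.count Nat.Prime q := Nat.count_monotone _ h1
    have hnth : Nat.nth Nat.Prime (k + 1) ≤ q := by
      have h := Nat.nth_monotone hinf hcount
      rwa [Nat.nth_count hq] at h
    calc Nat.nth Nat.Prime (k + 1) ≤ q := hnth
      _ ≤ 2 * Nat.nth Nat.Prime k := h2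
      _ ≤ 2 * 2 ^ (k + 1) := by omega
      _ = 2 ^ (k + 2) := by ring

lemma p_ge_two (n : ℕ) : (2 : ℝ) ≤ p n := by
  have : Nat.Prime (Nat.nth Nat.Prime (n - 1)) :=
    Nat.nth_mem_of_infinite Nat.infinite_setOf_prime _
  unfold p
  exact_mod_cast this.two_le

lemma p_pos (n : ℕ) : (0 : ℝ) < p n := lt_of_lt_of_le two_pos (p_ge_two n)

lemma p_le_pow {n : ℕ} (hn : 1 ≤ n) : p n ≤ (2 : ℝ) ^ n := by
  have h := nth_prime_le_pow (n - 1)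
  have : n - 1 + 1 = n := by omega
  rw [this] at h
  unfold p
  exact_mod_cast h

/-- the rpow root `p n ^ (1/n)` is at most `2` for `n ≥ 1`. -/
lemma root_le_two {n : ℕ} (hn : 1 ≤ n) : p n ^ ((1 : ℝ) / n) ≤ 2 := by
  have hn' : (0 : ℝ) < n := by exact_mod_cast hn
  have h1 : p n ^ ((1 : ℝ) / n) ≤ ((2 : ℝ) ^ n) ^ ((1 : ℝ) / n) :=
    Real.rpow_le_rpow (p_pos n).le (p_le_pow hn) (by positivity)
  calc p n ^ ((1 : ℝ) / n) ≤ ((2 : ℝ) ^ n) ^ ((1 : ℝ) / n) := h1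
    _ = (2 : ℝ) ^ ((n : ℝ) * (1 / n)) := by
        rw [← Real.rpow_natCast 2 n, ← Real.rpow_mul (by norm_num)]
    _ = 2 := by rw [mul_one_div, div_self hn'.ne', Real.rpow_one]

lemma one_le_root (n : ℕ) : (1 : ℝ) ≤ p n ^ ((1 : ℝ) / n) :=
  Real.one_le_rpow (by linarith [p_ge_two n]) (by positivity)

open Filter in
theorem liminf_firoozbakht_ratio_le_one :
    Filter.atTop.liminf
      (fun n : ℕ => p (n + 1) ^ ((1 : ℝ) / (n + 1)) / p n ^ ((1 : ℝ) / n)) ≤ 1 := by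
  set g : ℕ → ℝ := fun n => p n ^ ((1 : ℝ) / n) with hg
  set u : ℕ → ℝ := fun n : ℕ => p (n + 1) ^ ((1 : ℝ) / (n + 1)) / p n ^ ((1 : ℝ) / n) with hu
  have hgpos : ∀ n, 0 < g n := fun n => Real.rpow_pos_of_pos (p_pos n) _
  have hueq : ∀ n : ℕ, u n = g (n + 1) / g n := by
    intro n
    simp only [hu, hg]
    push_cast
    ring_nf
  by_contra h
  push_neg at h
  set L := Filter.atTop.liminf u with hL
  set c : ℝ := (1 + L) / 2 with hc
  have hc1 : 1 < c := by simp only [hc]; linarith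
  have hcL : c < L := by simp only [hc]; linarith
  have hbdd : Filter.atTop.IsBoundedUnder (· ≥ ·) u := by
    refine ⟨0, Filter.eventually_map.mpr (Filter.Eventually.of_forall fun n => ?_)⟩
    show (0:ℝ) ≤ u n
    exact div_nonneg (Real.rpow_nonneg (p_pos _).le _) (Real.rpow_nonneg (p_pos _).le _)
  have hev : ∀ᶠ n in Filter.atTop, c < u n :=
    Filter.eventually_lt_of_lt_liminf hcL hbdd
  obtain ⟨N0, hN0⟩ := Filter.eventually_atTop.mp hev
  set N := N0 + 1 with hNdef
  have hN : ∀ n ≥ N, c < u n := fun n hn => hN0 n (by omega)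
  -- growth: g (N + k) ≥ c ^ k * g N
  have hgrow : ∀ k : ℕ, c ^ k * g N ≤ g (N + k) := by
    intro k
    induction k with
    | zero => simp
    | succ k ih =>
      have hck : c < u (N + k) := hN _ (Nat.le_add_right N k)
      rw [hueq] at hck
      have hgk : 0 < g (N + k) := hgpos _
      have : c * g (N + k) < g (N + k + 1) := by
        rw [← lt_div_iff₀ hgk] at *
        exact hck
      calc c ^ (k + 1) * g N = c * (c ^ k * g N) := by ring
        _ ≤ c * g (N + k) := by
            have hc0 : 0 < c := lt_trans one_pos hc1
            nlinarith
        _ ≤ g (N + (k + 1)) := by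
            have : N + (k + 1) = N + k + 1 := by omega
            rw [this]; linarith
  obtain ⟨k, hk⟩ := pow_unbounded_of_one_lt (2 : ℝ) hc1
  have h1 : (1 : ℝ) ≤ g N := one_le_root N
  have h2 : g (N + k) ≤ 2 := root_le_two (by omega)
  have h3 : c ^ k ≤ c ^ k * g N := le_mul_of_one_le_right (by positivity) h1
  linarith [hgrow k]
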